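/- For 0 < x < 1/2, tan(πx) = ∏_{n=1}^∞ ((2n-2+2x)(2n-2x))/((2n-1)² - (2x)²). -/

import Mathlib

/-!
The `m`-th partial product equals `W m * ((2m+1)/(m+x)) * S m / (π * C m)`, where `W` is the
Wallis product (`→ π/2`), `S` Euler's sine product at `x` (`→ sin πx`) and
`C m = ∏_{k<m} (1 - (2x)²/(2k+1)²)` the cosine product (`→ cos πx`); the factor
`(2m+1)/(m+x)` comes from telescoping and tends to `2`. The cosine product is derived from the
sine product: splitting Euler's product for `sin 2πy` into even and odd factors gives
`2 · (sine product at y) · C`, and `sin 2πy = 2 sin πy cos πy`.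
-/

open Real Filter Finset

theorem Finset.prod_range_two_mul {M : Type*} [CommMonoid M] (f : ℕ → M) (m : ℕ) :
    ∏ j ∈ range (2 * m), f j = ∏ k ∈ range m, (f (2 * k) * f (2 * k + 1)) := by
  induction m with
  | zero => simp
  | succ m ih => rw [Nat.mul_succ, prod_range_succ, prod_range_succ, prod_range_succ, ih, mul_assoc]

theorem euler_sin_prod_two_mul_eq (y : ℝ) (m : ℕ) :
    π * (2 * y) * ∏ j ∈ range (2 * m), (1 - (2 * y) ^ 2 / ((j : ℝ) + 1) ^ 2) =
      2 * (π * y * ∏ j ∈ range m, (1 - y ^ 2 / ((j : ℝ) + 1) ^ 2)) *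
        ∏ k ∈ range m, (1 - (2 * y) ^ 2 / (2 * (k : ℝ) + 1) ^ 2) := by
  have even_factor (k : ℕ) :
      1 - (2 * y) ^ 2 / ((2 * k + 1 : ℕ) + 1 : ℝ) ^ 2 = 1 - y ^ 2 / ((k : ℝ) + 1) ^ 2 := by
    push_cast; field_simp; ring
  rw [prod_range_two_mul]
  simp only [even_factor, prod_mul_distrib]
  push_cast
  ring

theorem tendsto_euler_cos_prod {y : ℝ} (hy : sin (π * y) ≠ 0) :
    Tendsto (fun m : ℕ => ∏ k ∈ range m, (1 - (2 * y) ^ 2 / (2 * (k : ℝ) + 1) ^ 2)) atTop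
      (nhds (cos (π * y))) := by
  have hsin := tendsto_euler_sin_prod y
  have hsin2 := (tendsto_euler_sin_prod (2 * y)).comp (tendsto_id.const_mul_atTop' two_pos)
  have hlim : sin (π * (2 * y)) / (2 * sin (π * y)) = cos (π * y) := by
    rw [show π * (2 * y) = 2 * (π * y) by ring, sin_two_mul]
    field_simp
  rw [← hlim]
  refine (hsin2.div (hsin.const_mul 2) (mul_ne_zero two_ne_zero hy)).congr' ?_
  filter_upwards [hsin.eventually_ne hy] with m hm
  rw [Pi.div_apply, Function.comp_apply, id, euler_sin_prod_two_mul_eq]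
  exact mul_div_cancel_left₀ _ (mul_ne_zero two_ne_zero hm)

theorem tan_partial_prod_eq {x : ℝ} (hx0 : 0 < x) (hx1 : x < 1 / 2) (m : ℕ) :
    ∏ n ∈ Icc 1 m, (2 * (n : ℝ) - 2 + 2 * x) * (2 * n - 2 * x) / ((2 * n - 1) ^ 2 - (2 * x) ^ 2) =
      (∏ i ∈ range m, ((2 : ℝ) * i + 2) / (2 * i + 1) * ((2 * i + 2) / (2 * i + 3))) *
        ((2 * m + 1) / (m + x)) * (π * x * ∏ j ∈ range m, (1 - x ^ 2 / ((j : ℝ) + 1) ^ 2)) /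
        (π * ∏ k ∈ range m, (1 - (2 * x) ^ 2 / (2 * (k : ℝ) + 1) ^ 2)) := by
  induction m with
  | zero => simp [field]
  | succ m ih =>
    have hm : 0 ≤ (m : ℝ) := m.cast_nonneg
    have hodd : (2 * (m : ℝ) + 1) ^ 2 - (2 * x) ^ 2 ≠ 0 := by nlinarith
    rw [prod_Icc_succ_top (by omega), ih, prod_range_succ, prod_range_succ, prod_range_succ]
    push_cast
    generalize ∏ i ∈ range m, ((2 : ℝ) * i + 2) / (2 * i + 1) * ((2 * i + 2) / (2 * i + 3)) = W
    generalize ∏ j ∈ range m, (1 - x ^ 2 / ((j : ℝ) + 1) ^ 2) = E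
    generalize hC : ∏ k ∈ range m, (1 - (2 * x) ^ 2 / (2 * (k : ℝ) + 1) ^ 2) = C
    have hC0 : C ≠ 0 := by
      rw [← hC, prod_ne_zero_iff]
      intro k _
      have hk : 0 ≤ (k : ℝ) := k.cast_nonneg
      refine sub_ne_zero.2 (div_ne_one_of_ne ?_).symm
      nlinarith
    field_simp
    ring

/-- For `0 < x < 1/2`, `tan(πx) = ∏_{n=1}^∞ ((2n-2+2x)(2n-2x))/((2n-1)² - (2x)²)`. -/
theorem tan_pi_infinite_product (x : ℝ) (hx0 : 0 < x) (hx1 : x < 1/2) :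
    Tendsto (fun m : ℕ => ∏ n ∈ Finset.Icc 1 m,
        (2 * (n : ℝ) - 2 + 2 * x) * (2 * n - 2 * x) / ((2 * n - 1) ^ 2 - (2 * x) ^ 2)) atTop
      (nhds (Real.tan (Real.pi * x))) := by
  have hcos : cos (π * x) ≠ 0 :=
    (cos_pos_of_mem_Ioo ⟨by nlinarith [pi_pos], by nlinarith [pi_pos]⟩).ne'
  have hsin : sin (π * x) ≠ 0 :=
    (sin_pos_of_pos_of_lt_pi (by positivity) (by nlinarith [pi_pos])).ne'
  have hratio : Tendsto (fun m : ℕ => (2 * (m : ℝ) + 1) / (m + x)) atTop (nhds 2) := by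
    simpa [add_comm, mul_comm] using tendsto_add_mul_div_add_mul_atTop_nhds 1 x 2 one_ne_zero
  have hlim : π / 2 * 2 * sin (π * x) / (π * cos (π * x)) = tan (π * x) := by
    rw [tan_eq_sin_div_cos]
    field_simp
  rw [← hlim]
  refine (((tendsto_prod_pi_div_two.mul hratio).mul (tendsto_euler_sin_prod x)).div
    ((tendsto_euler_cos_prod hsin).const_mul π) (mul_ne_zero pi_ne_zero hcos)).congr fun m => ?_
  exact (tan_partial_prod_eq hx0 hx1 m).symm
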